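/- arXiv:1707.08736 — 2 statements merged into one kernel-verified Lean document; each statement's English description precedes it below -/
import Mathlib

section
/- Given a CGS-SPC G and its corresponding CGS-EPC G′ (constructed with the dummy agent * and turn variable), for every path λ′ of G′ starting in a state where turn is false, the sequence λ defined by λ[k] = λ′[2k] ∩ Φ for all k ∈ ℕ is a path of G, and moreover λ′[2k] ∩ Φ = λ′[2k+1] ∩ Φ for all k. -/
open Set
open scoped Classical

structure CGS (Agent : Type) (Atom : Type) where
  ctrl : Agent → Set Atom
  d : Agent → Set Atom → Set (Set Atom)
  trans : Set Atom → (Agent → Set Atom) → Set Atom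

namespace CGS

variable {Agent Atom : Type}

/-- Well-formedness: nonempty protocol, and actions only use controlled atoms. -/
def WF (G : CGS Agent Atom) : Prop :=
  (∀ i s, (G.d i s).Nonempty) ∧ (∀ i s a, a ∈ G.d i s → a ⊆ G.ctrl i)

/-- Exclusive propositional control: disjoint, complete, and the transition is union. -/
def IsEPC (G : CGS Agent Atom) : Prop :=
  Pairwise (fun i j => Disjoint (G.ctrl i) (G.ctrl j)) ∧
  (⋃ i, G.ctrl i) = Set.univ ∧
  ∀ s α, G.trans s α = ⋃ i, α i

def Act (G : CGS Agent Atom) (s : Set Atom) : Set (Agent → Set Atom) :=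
  {α | ∀ i, α i ∈ G.d i s}

def Succ (G : CGS Agent Atom) (s : Set Atom) : Set (Set Atom) :=
  {t | ∃ α ∈ G.Act s, G.trans s α = t}

def IsPath (G : CGS Agent Atom) (lam : ℕ → Set Atom) : Prop :=
  ∀ k, lam (k + 1) ∈ G.Succ (lam k)

def ValidStrat (G : CGS Agent Atom) (C : Set Agent)
    (σ : Agent → Set Atom → Set Atom) : Prop :=
  ∀ i ∈ C, ∀ s, σ i s ∈ G.d i s

def out (G : CGS Agent Atom) (C : Set Agent)
    (σ : Agent → Set Atom → Set Atom) (s : Set Atom) : Set (ℕ → Set Atom) :=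
  {lam | lam 0 = s ∧ ∀ k, ∃ α ∈ G.Act (lam k),
    (∀ i ∈ C, α i = σ i (lam k)) ∧ lam (k + 1) = G.trans (lam k) α}

end CGS

/-- ATL* (path) formulas. -/
inductive Form (Agent Atom : Type) : Type where
  | atom : Atom → Form Agent Atom
  | neg : Form Agent Atom → Form Agent Atom
  | disj : Form Agent Atom → Form Agent Atom → Form Agent Atom
  | next : Form Agent Atom → Form Agent Atom
  | untl : Form Agent Atom → Form Agent Atom → Form Agent Atom
  | coal : Set Agent → Form Agent Atom → Form Agent Atom

namespace Form

def size {Agent Atom : Type} : Form Agent Atom → ℕ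
  | atom _ => 1
  | neg φ => φ.size + 1
  | disj φ ψ => φ.size + ψ.size + 1
  | next φ => φ.size + 1
  | untl φ ψ => φ.size + ψ.size + 1
  | coal _ φ => φ.size + 1

end Form

/-- State formulas of ATL*. -/
inductive IsStateForm {Agent Atom : Type} : Form Agent Atom → Prop where
  | atom (p : Atom) : IsStateForm (.atom p)
  | neg {φ} : IsStateForm φ → IsStateForm (.neg φ)
  | disj {φ ψ} : IsStateForm φ → IsStateForm ψ → IsStateForm (.disj φ ψ)
  | coal (C : Set Agent) (φ : Form Agent Atom) : IsStateForm (.coal C φ)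

def shiftSeq {α : Type} (lam : ℕ → α) (n : ℕ) : ℕ → α := fun k => lam (k + n)

/-- Satisfaction of an ATL* path formula along a computation (memoryless strategies). -/
def psat {Agent Atom : Type} (G : CGS Agent Atom) :
    Form Agent Atom → (ℕ → Set Atom) → Prop
  | .atom p, lam => p ∈ lam 0
  | .neg φ, lam => ¬ psat G φ lam
  | .disj φ ψ, lam => psat G φ lam ∨ psat G ψ lam
  | .next φ, lam => psat G φ (shiftSeq lam 1)
  | .untl φ ψ, lam => ∃ n, psat G ψ (shiftSeq lam n) ∧ ∀ m < n, psat G φ (shiftSeq lam m)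
  | .coal C φ, lam => ∃ σ, G.ValidStrat C σ ∧ ∀ μ ∈ G.out C σ (lam 0), psat G φ μ

/-- Satisfaction of an ATL* state formula at a state. -/
def ssat {Agent Atom : Type} (G : CGS Agent Atom) (φ : Form Agent Atom)
    (s : Set Atom) : Prop :=
  psat G φ (fun _ => s)

/-- Atoms of the associated exclusive-control structure: Φ ∪ {turn} ∪ {c_{ip}}. -/
abbrev Atom2 (Agent Atom : Type) : Type := Atom ⊕ (Unit ⊕ Agent × Atom)

/-- Agents of the associated exclusive-control structure: N ∪ {*}. -/
abbrev Agent2 (Agent : Type) : Type := Agent ⊕ Unit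

def turnV {Agent Atom : Type} : Atom2 Agent Atom := Sum.inr (Sum.inl ())

def baseV {Agent Atom : Type} (p : Atom) : Atom2 Agent Atom := Sum.inl p

def cV {Agent Atom : Type} (i : Agent) (p : Atom) : Atom2 Agent Atom :=
  Sum.inr (Sum.inr (i, p))

/-- Restriction of a state of `G'` to the atoms of `G` (s' ∩ Φ). -/
def restr {Agent Atom : Type} (s' : Set (Atom2 Agent Atom)) : Set Atom :=
  {p | baseV (Agent := Agent) p ∈ s'}

/-- Canonical state: agrees with `s` on Φ, all other variables false. -/
def canonical {Agent Atom : Type} (s : Set Atom) : Set (Atom2 Agent Atom) :=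
  Sum.inl '' s

/-- Read off a `G`-joint action from the `c_{ip}` variables of a `G'`-state. -/
def readAct {Agent Atom : Type} (G : CGS Agent Atom) (s' : Set (Atom2 Agent Atom)) :
    Agent → Set Atom :=
  fun i => {p | p ∈ G.ctrl i ∧ cV i p ∈ s'}

/-- The CGS-EPC `G'` corresponding to a CGS-SPC `G` (Definition 5 of the paper). -/
noncomputable def epcOf {Agent Atom : Type} (G : CGS Agent Atom) :
    CGS (Agent2 Agent) (Atom2 Agent Atom) where
  ctrl := fun j =>
    match j with
    | Sum.inl i => {q | ∃ p ∈ G.ctrl i, q = cV i p}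
    | Sum.inr _ => insert turnV (Set.range (baseV (Agent := Agent) (Atom := Atom)))
  d := fun j s' =>
    match j with
    | Sum.inl i =>
        if turnV ∈ s' then {∅}
        else {a | ∃ α ∈ G.d i (restr s'), a = cV i '' α}
    | Sum.inr _ =>
        if turnV ∈ s' then {baseV '' G.trans (restr s') (readAct G s')}
        else {insert turnV (baseV '' restr s')}
  trans := fun _ α => ⋃ j, α j

/-- Joint `G'`-action (α'₁,…,α'ₙ,+turn) encoding a `G`-action α at state s'. -/
def encAct {Agent Atom : Type} (_G : CGS Agent Atom) (s' : Set (Atom2 Agent Atom))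
    (α : Agent → Set Atom) : Agent2 Agent → Set (Atom2 Agent Atom) :=
  fun j =>
    match j with
    | Sum.inl i => cV i '' α i
    | Sum.inr _ => insert turnV (baseV '' restr s')

/-- Joint `G'`-action (∅,…,∅, τ(s' ∩ Φ, α)) performing the aggregation. -/
def aggAct {Agent Atom : Type} (G : CGS Agent Atom) (s' : Set (Atom2 Agent Atom))
    (α : Agent → Set Atom) : Agent2 Agent → Set (Atom2 Agent Atom) :=
  fun j =>
    match j with
    | Sum.inl _ => ∅
    | Sum.inr _ => baseV '' G.trans (restr s') α

/-- Projection Π of a `G'`-path to a `G`-path: λ[k] = λ'[2k] ∩ Φ. -/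
def projPath {Agent Atom : Type} (lam' : ℕ → Set (Atom2 Agent Atom)) : ℕ → Set Atom :=
  fun k => restr (lam' (2 * k))

/-- Condition (†): λ[k] = λ'[2k] ∩ Φ = λ'[2k+1] ∩ Φ for all k. -/
def Corr {Agent Atom : Type} (lam : ℕ → Set Atom)
    (lam' : ℕ → Set (Atom2 Agent Atom)) : Prop :=
  ∀ k, restr (lam' (2 * k)) = lam k ∧ restr (lam' (2 * k + 1)) = lam k

/-- Canonical `G'`-path associated to a `G`-path. -/
def CanonPath {Agent Atom : Type} (G : CGS Agent Atom) (lam : ℕ → Set Atom)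
    (lam' : ℕ → Set (Atom2 Agent Atom)) : Prop :=
  (epcOf G).IsPath lam' ∧ lam' 0 = canonical (lam 0) ∧ Corr lam lam'

/-- The translation `tr`: replaces X by XX, commutes with everything else. -/
def trF {Agent Atom : Type} : Form Agent Atom → Form (Agent2 Agent) (Atom2 Agent Atom)
  | .atom p => .atom (baseV p)
  | .neg φ => .neg (trF φ)
  | .disj φ ψ => .disj (trF φ) (trF ψ)
  | .next φ => .next (.next (trF φ))
  | .untl φ ψ => .untl (trF φ) (trF ψ)
  | .coal C φ => .coal (Sum.inl '' C) (trF φ)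

/-!
While `turn` is false, the agents of `G` write their chosen actions into the variables `c_{ip}`
and `*` copies the Φ-part of the state and raises `turn`; while `turn` is true, `*` alone writes
`τ` of the action read back from the `c_{ip}` and `turn` drops. So two consecutive steps of `G′`
from a state where `turn` is false keep Φ fixed and then perform one step of `G`, ending again
where `turn` is false; induction along the even positions gives the theorem.
-/

section EpcOf

variable {Agent Atom : Type} {G : CGS Agent Atom} {s : Set (Atom2 Agent Atom)}

lemma restr_image_baseV (s : Set Atom) : restr (Agent := Agent) (baseV '' s) = s := by
  ext p; simp [restr, baseV]

lemma turnV_notMem_image_baseV (s : Set Atom) : (turnV : Atom2 Agent Atom) ∉ baseV '' s := by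
  simp [turnV, baseV]

lemma iUnion_aggAct (α : Agent → Set Atom) :
    ⋃ j, aggAct G s α j = baseV '' G.trans (restr s) α := by
  simp [aggAct, Set.iUnion_sum, Set.iUnion_const]

lemma iUnion_encAct (α : Agent → Set Atom) :
    ⋃ j, encAct G s α j = insert turnV ((⋃ i, cV i '' α i) ∪ baseV '' restr s) := by
  simp [encAct, Set.iUnion_sum, Set.iUnion_const]

lemma turnV_mem_iUnion_encAct (α : Agent → Set Atom) : turnV ∈ ⋃ j, encAct G s α j := by
  simp [iUnion_encAct]

lemma restr_iUnion_encAct (α : Agent → Set Atom) : restr (⋃ j, encAct G s α j) = restr s := by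
  ext p
  simp [iUnion_encAct, restr, baseV, turnV, cV]

lemma readAct_iUnion_encAct {α : Agent → Set Atom} (hα : ∀ i, α i ⊆ G.ctrl i) :
    readAct G (⋃ j, encAct G s α j) = α := by
  funext i; ext p
  simpa [iUnion_encAct, readAct, baseV, turnV, cV] using @hα i p

lemma epcOf_act_of_turnV_notMem (h : turnV ∉ s) {α' : Agent2 Agent → Set (Atom2 Agent Atom)}
    (hα' : α' ∈ (epcOf G).Act s) : ∃ α ∈ G.Act (restr s), α' = encAct G s α := by
  have hagents : ∀ i, ∃ a ∈ G.d i (restr s), α' (.inl i) = cV i '' a := by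
    intro i; simpa [epcOf, h] using hα' (.inl i)
  choose α hαd hαeq using hagents
  refine ⟨α, hαd, funext fun j => ?_⟩
  rcases j with i | ⟨⟨⟩⟩
  · exact hαeq i
  · simpa [epcOf, encAct, h] using hα' (.inr ())

lemma epcOf_act_of_turnV_mem (h : turnV ∈ s) {α' : Agent2 Agent → Set (Atom2 Agent Atom)}
    (hα' : α' ∈ (epcOf G).Act s) : α' = aggAct G s (readAct G s) := by
  funext j
  rcases j with i | ⟨⟨⟩⟩
  · simpa [epcOf, aggAct, h] using hα' (.inl i)
  · simpa [epcOf, aggAct, h] using hα' (.inr ())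

lemma epcOf_succ_of_turnV_notMem (h : turnV ∉ s) {t : Set (Atom2 Agent Atom)}
    (ht : t ∈ (epcOf G).Succ s) : ∃ α ∈ G.Act (restr s), t = ⋃ j, encAct G s α j := by
  obtain ⟨α', hα', rfl⟩ := ht
  obtain ⟨α, hα, rfl⟩ := epcOf_act_of_turnV_notMem h hα'
  exact ⟨α, hα, rfl⟩

lemma epcOf_succ_of_turnV_mem (h : turnV ∈ s) {t : Set (Atom2 Agent Atom)}
    (ht : t ∈ (epcOf G).Succ s) : t = baseV '' G.trans (restr s) (readAct G s) := by
  obtain ⟨α', hα', rfl⟩ := ht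
  rw [epcOf_act_of_turnV_mem h hα']
  exact iUnion_aggAct _

lemma epcOf_succ_succ (hctrl : ∀ i s a, a ∈ G.d i s → a ⊆ G.ctrl i)
    {s₀ s₁ s₂ : Set (Atom2 Agent Atom)} (h₀ : turnV ∉ s₀)
    (h₁ : s₁ ∈ (epcOf G).Succ s₀) (h₂ : s₂ ∈ (epcOf G).Succ s₁) :
    restr s₁ = restr s₀ ∧ restr s₂ ∈ G.Succ (restr s₀) ∧ turnV ∉ s₂ := by
  obtain ⟨α, hα, rfl⟩ := epcOf_succ_of_turnV_notMem h₀ h₁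
  have hs₂ := epcOf_succ_of_turnV_mem (turnV_mem_iUnion_encAct α) h₂
  rw [restr_iUnion_encAct, readAct_iUnion_encAct fun i => hctrl i _ _ (hα i)] at hs₂
  subst hs₂
  exact ⟨restr_iUnion_encAct α, ⟨α, hα, (restr_image_baseV _).symm⟩, turnV_notMem_image_baseV _⟩

end EpcOf

/-- Every path of `G'` starting with `turn` false projects
to a path of `G`, and even/odd states agree on Φ. -/
theorem path_of_epcOf_projects {Agent Atom : Type} (G : CGS Agent Atom)
    (hWF : G.WF) (lam' : ℕ → Set (Atom2 Agent Atom))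
    (hpath : (epcOf G).IsPath lam')
    (hturn : turnV ∉ lam' 0) :
    G.IsPath (projPath lam') ∧
      ∀ k, restr (lam' (2 * k)) = restr (lam' (2 * k + 1)) := by
  have hstep : ∀ k, turnV ∉ lam' (2 * k) →
      restr (lam' (2 * k + 1)) = restr (lam' (2 * k)) ∧
        restr (lam' (2 * (k + 1))) ∈ G.Succ (restr (lam' (2 * k))) ∧ turnV ∉ lam' (2 * (k + 1)) :=
    fun k hk => epcOf_succ_succ hWF.2 hk (hpath _) (hpath _)
  have heven : ∀ k, turnV ∉ lam' (2 * k) := fun k => by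
    induction k with
    | zero => exact hturn
    | succ k ih => exact (hstep k ih).2.2
  exact ⟨fun k => (hstep k (heven k)).2.1, fun k => (hstep k (heven k)).1.symm⟩
end

section
/- Given a CGS-SPC G and its corresponding CGS-EPC G′, for every path λ of G there exists a path λ′ of G′ such that λ[k] = λ′[2k] ∩ Φ = λ′[2k+1] ∩ Φ for all k ∈ ℕ, and λ′[0] is the canonical state associated to λ[0] (the state agreeing with λ[0] on Φ and setting all variables outside Φ to false). -/
open Set
open scoped Classical

/-! One step `s → τ(s, α)` of `G` is simulated by two steps of `G'`. From the canonical state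
of `s` (turn off) each agent `i` writes its action `αᵢ` into the variables `c_{ip}` while `*`
switches turn on and copies `s`; from there (turn on) the others stay idle and `*` writes
`τ(s, α)`, read off from the `c_{ip}`, which brings `G'` back to the canonical state of
`τ(s, α)`. Reading `α` back is faithful because actions only use controlled atoms. -/

def midState {Agent Atom : Type} (s : Set Atom) (α : Agent → Set Atom) :
    Set (Atom2 Agent Atom) :=
  insert turnV (baseV '' s) ∪ ⋃ i, cV i '' α i

section Simulation

variable {Agent Atom : Type}

@[simp]
lemma restr_canonical (s : Set Atom) : restr (Agent := Agent) (canonical s) = s := by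
  ext p
  simp [restr, canonical, baseV]

lemma turnV_not_mem_canonical (s : Set Atom) :
    turnV (Agent := Agent) (Atom := Atom) ∉ canonical s := by
  simp [canonical, turnV]

lemma turnV_mem_midState (s : Set Atom) (α : Agent → Set Atom) : turnV ∈ midState s α :=
  Or.inl (mem_insert _ _)

@[simp]
lemma restr_midState (s : Set Atom) (α : Agent → Set Atom) : restr (midState s α) = s := by
  ext p
  simp [restr, midState, baseV, turnV, cV]

lemma readAct_midState (G : CGS Agent Atom) (s : Set Atom) {α : Agent → Set Atom}
    (hα : ∀ i, α i ⊆ G.ctrl i) : readAct G (midState s α) = α := by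
  funext i
  ext p
  simpa [readAct, midState, cV, baseV, turnV] using @hα i p

lemma encAct_mem_act {G : CGS Agent Atom} {s : Set Atom} {α : Agent → Set Atom}
    (hα : α ∈ G.Act s) : encAct G (canonical s) α ∈ (epcOf G).Act (canonical s) := by
  rintro (i | u)
  all_goals
    simp only [epcOf, encAct]
    rw [if_neg (turnV_not_mem_canonical s), restr_canonical]
  exacts [⟨α i, hα i, rfl⟩, rfl]

lemma trans_encAct (G : CGS Agent Atom) (s : Set Atom) (α : Agent → Set Atom) :
    (epcOf G).trans (canonical s) (encAct G (canonical s) α) = midState s α := by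
  simp only [epcOf, midState, iUnion_sum, encAct, restr_canonical, iUnion_const]
  exact union_comm _ _

lemma aggAct_mem_act (G : CGS Agent Atom) (s : Set Atom) {α : Agent → Set Atom}
    (hα : ∀ i, α i ⊆ G.ctrl i) :
    aggAct G (midState s α) α ∈ (epcOf G).Act (midState s α) := by
  rintro (i | u)
  all_goals
    simp only [epcOf, aggAct]
    rw [if_pos (turnV_mem_midState s α)]
  · rfl
  · rw [readAct_midState G s hα]
    rfl

lemma trans_aggAct (G : CGS Agent Atom) (s : Set Atom) (α : Agent → Set Atom) :
    (epcOf G).trans (midState s α) (aggAct G (midState s α) α) = canonical (G.trans s α) := by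
  simp only [epcOf, aggAct, iUnion_sum, iUnion_empty, iUnion_const, restr_midState,
    empty_union]
  rfl

lemma midState_mem_succ_canonical {G : CGS Agent Atom} {s : Set Atom} {α : Agent → Set Atom}
    (hα : α ∈ G.Act s) : midState s α ∈ (epcOf G).Succ (canonical s) :=
  ⟨_, encAct_mem_act hα, trans_encAct G s α⟩

lemma canonical_trans_mem_succ_midState {G : CGS Agent Atom} {s : Set Atom}
    {α : Agent → Set Atom} (hα : ∀ i, α i ⊆ G.ctrl i) :
    canonical (G.trans s α) ∈ (epcOf G).Succ (midState s α) :=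
  ⟨_, aggAct_mem_act G s hα, trans_aggAct G s α⟩

end Simulation

section Interleave

variable {X : Type}

def interleave (e o : ℕ → X) (n : ℕ) : X :=
  if n % 2 = 0 then e (n / 2) else o (n / 2)

@[simp]
lemma interleave_two_mul (e o : ℕ → X) (k : ℕ) : interleave e o (2 * k) = e k := by
  simp [interleave]

@[simp]
lemma interleave_two_mul_add_one (e o : ℕ → X) (k : ℕ) :
    interleave e o (2 * k + 1) = o k := by
  simp [interleave, Nat.mul_add_div]

lemma CGS.isPath_interleave {Agent : Type} {H : CGS Agent X} {e o : ℕ → Set X}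
    (heo : ∀ k, o k ∈ H.Succ (e k)) (hoe : ∀ k, e (k + 1) ∈ H.Succ (o k)) :
    H.IsPath (interleave e o) := by
  intro n
  obtain ⟨k, rfl | rfl⟩ := Nat.even_or_odd' n
  · simpa using heo k
  · simpa [show 2 * k + 1 + 1 = 2 * (k + 1) by ring] using hoe k

end Interleave

/-- Every path of `G` lifts to a canonical associated path of `G'`. -/
theorem exists_canonical_lift {Agent Atom : Type} (G : CGS Agent Atom)
    (hWF : G.WF) (lam : ℕ → Set Atom) (hlam : G.IsPath lam) :
    ∃ lam' : ℕ → Set (Atom2 Agent Atom),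
      (epcOf G).IsPath lam' ∧ lam' 0 = canonical (lam 0) ∧
      ∀ k, restr (lam' (2 * k)) = lam k ∧ restr (lam' (2 * k + 1)) = lam k := by
  choose α hαAct hαtrans using hlam
  have hctrl : ∀ k i, α k i ⊆ G.ctrl i := fun k i => hWF.2 i (lam k) _ (hαAct k i)
  refine ⟨interleave (fun k => canonical (lam k)) (fun k => midState (lam k) (α k)),
    CGS.isPath_interleave (fun k => midState_mem_succ_canonical (hαAct k)) (fun k => ?_),
    interleave_two_mul _ _ 0, fun k => by simp⟩
  rw [← hαtrans k]
  exact canonical_trans_mem_succ_midState (hctrl k)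
end
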